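/- Assume that the cost per stage g is bounded over X×U×W, that there exists a uniformly proper policy, and that Ĵ = J*. Then J* is the unique solution of Bellman's equation within the set B. -/

import Mathlib

open scoped ENNReal
open Filter
open scoped Classical NNReal

/-- A stochastic shortest path (SSP) problem with state space `X`, control space `U`,
countable disturbance space `W`, a cost-free absorbing termination state `t`,
nonempty control constraint sets `Uc x ⊆ U`, disturbance distributions `P x u`,
system function `f`, and nonnegative (finite-valued) cost per stage `g`. -/
structure SSP (X U W : Type*) [Countable W] where
  t : X
  Uc : X → Set U
  Uc_nonempty : ∀ x, (Uc x).Nonempty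
  P : X → U → PMF W
  f : X → U → W → X
  g : X → U → W → ℝ≥0∞
  g_lt_top : ∀ x u w, g x u w < ⊤
  f_absorb : ∀ u ∈ Uc t, ∀ w, f t u w = t
  g_zero : ∀ u ∈ Uc t, ∀ w, g t u w = 0

namespace SSP

variable {X U W : Type*} [Countable W] (S : SSP X U W)

/-- A policy `π = (μ₀, μ₁, …)` is admissible if `μ_k(x) ∈ U(x)` for all `k, x`. -/
def IsPolicy (π : ℕ → X → U) : Prop := ∀ k x, π k x ∈ S.Uc x

/-- Distribution of the state `x_k` after `k` steps under policy `π` starting from `x₀`. -/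
noncomputable def stateDist (π : ℕ → X → U) (x₀ : X) : ℕ → PMF X
  | 0 => PMF.pure x₀
  | k + 1 => (stateDist π x₀ k).bind fun x => (S.P x (π k x)).map (S.f x (π k x))

/-- Expected value `E^π_{x₀}[J(x_k)]` of a nonnegative function along the trajectory. -/
noncomputable def expect (π : ℕ → X → U) (x₀ : X) (k : ℕ) (J : X → ℝ≥0∞) : ℝ≥0∞ :=
  ∑' x, S.stateDist π x₀ k x * J x

/-- Expected cost `E^π_{x₀}[g(x_k, μ_k(x_k), w_k)]` of the `k`-th stage. -/
noncomputable def stageCost (π : ℕ → X → U) (x₀ : X) (k : ℕ) : ℝ≥0∞ :=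
  S.expect π x₀ k fun x => ∑' w, S.P x (π k x) w * S.g x (π k x) w

/-- The cost `J_π(x₀) = Σ_{k≥0} E^π_{x₀}[g(x_k, μ_k(x_k), w_k)]` of a policy. -/
noncomputable def Jcost (π : ℕ → X → U) (x₀ : X) : ℝ≥0∞ :=
  ∑' k, S.stageCost π x₀ k

/-- `r_k(π, x₀)`: probability that `x_k ≠ t` under `π` starting from `x₀`. -/
noncomputable def r (π : ℕ → X → U) (x₀ : X) (k : ℕ) : ℝ≥0∞ :=
  S.expect π x₀ k fun x => if x = S.t then 0 else 1

/-- `Σ_{k≥0} r_k(π,x₀)`: expected number of steps to reach the destination. -/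
noncomputable def N (π : ℕ → X → U) (x₀ : X) : ℝ≥0∞ := ∑' k, S.r π x₀ k

/-- A policy is proper at `x` if it is admissible, `J_π(x) < ∞` and `Σ_k r_k(π,x) < ∞`. -/
def ProperAt (π : ℕ → X → U) (x : X) : Prop :=
  S.IsPolicy π ∧ S.Jcost π x < ⊤ ∧ S.N π x < ⊤

/-- The optimal cost function `J*`. -/
noncomputable def Jstar (x : X) : ℝ≥0∞ := ⨅ π ∈ {π | S.IsPolicy π}, S.Jcost π x

/-- The restricted optimal cost function `Ĵ` over policies proper at `x`
(infimum over the empty set is `∞`). -/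
noncomputable def Jhat (x : X) : ℝ≥0∞ := ⨅ π ∈ {π | S.ProperAt π x}, S.Jcost π x

/-- The effective domain `X̂ = {x | Ĵ(x) < ∞}` of `Ĵ`. -/
def Xhat : Set X := {x | S.Jhat x < ⊤}

/-- Expected `k`-th stage cost in the `δ`-perturbed problem (stage cost `g + δ` off `t`). -/
noncomputable def stageCostPert (δ : ℝ≥0∞) (π : ℕ → X → U) (x₀ : X) (k : ℕ) : ℝ≥0∞ :=
  S.expect π x₀ k fun x =>
    ∑' w, S.P x (π k x) w * (S.g x (π k x) w + if x = S.t then 0 else δ)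

/-- The cost `J_{π,δ}` of a policy in the `δ`-perturbed problem. -/
noncomputable def Jpert (δ : ℝ≥0∞) (π : ℕ → X → U) (x₀ : X) : ℝ≥0∞ :=
  ∑' k, S.stageCostPert δ π x₀ k

/-- The optimal cost function `Ĵ_δ` of the `δ`-perturbed problem. -/
noncomputable def JhatPert (δ : ℝ≥0∞) (x : X) : ℝ≥0∞ :=
  ⨅ π ∈ {π | S.IsPolicy π}, S.Jpert δ π x

/-- `Q J x u = E_{w∼P(·|x,u)}[g(x,u,w) + J(f(x,u,w))]`. -/
noncomputable def Q (J : X → ℝ≥0∞) (x : X) (u : U) : ℝ≥0∞ :=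
  ∑' w, S.P x u w * (S.g x u w + J (S.f x u w))

/-- The Bellman operator `(TJ)(x) = inf_{u ∈ U(x)} E[g(x,u,w) + J(f(x,u,w))]`. -/
noncomputable def bellman (J : X → ℝ≥0∞) (x : X) : ℝ≥0∞ := ⨅ u ∈ S.Uc x, S.Q J x u

/-- The tail policy `π_k = (μ_k, μ_{k+1}, …)`. -/
def tail (π : ℕ → X → U) (k : ℕ) : ℕ → X → U := fun m => π (k + m)

/-- The set `Ŵ` of functions `J` with `J(t) = 0`, `Ĵ ≤ J`, and
`E^π_{x₀}[J(x_k)] → 0` for every pair `(π, x₀)` with `π` proper at `x₀`. -/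
def What : Set (X → ℝ≥0∞) :=
  {J | J S.t = 0 ∧ S.Jhat ≤ J ∧
    ∀ π x₀, S.ProperAt π x₀ → Tendsto (fun k => S.expect π x₀ k J) atTop (nhds 0)}

/-- The set `B` of functions `J` with `J(t) = 0` that are bounded over `X̂`. -/
def Bset : Set (X → ℝ≥0∞) :=
  {J | J S.t = 0 ∧ (⨆ x ∈ S.Xhat, J x) < ⊤}

/-- A policy is uniformly proper if it is admissible and the expected number of steps
to reach the destination is uniformly bounded over `X̂`. -/
def UniformlyProper (π : ℕ → X → U) : Prop :=
  S.IsPolicy π ∧ (⨆ x ∈ S.Xhat, S.N π x) < ⊤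

/-- The cost per stage `g` is (uniformly) bounded over `X × U × W`. -/
def BoundedCost : Prop := ∃ b : ℝ≥0∞, b < ⊤ ∧ ∀ x u w, S.g x u w ≤ b

end SSP

/-!
Costs are nonnegative, so `J*` lies below every `J` with `T J ≤ J`: following controls that are
`e k`-optimal for `J` telescopes to a policy of cost at most `J + ∑ e k`. In particular
`T (T J*) ≤ T J* ≤ J*` gives `J* = T J*`. Conversely, telescoping `J ≤ T J` along a policy proper
at `x` leaves the tail `E[J(x_k)] ≤ (sup_{X̂} J) r_k → 0`, since such a policy only visits `X̂`;
hence `J ≤ Ĵ` for `J ∈ B`. A fixed point in `B` is squeezed between `J*` and `Ĵ = J*`, and a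
bounded cost together with a uniformly proper policy puts `J*` itself in `B`.
-/

namespace PMF

variable {α β : Type*}

theorem tsum_mul_const (p : PMF α) (c : ℝ≥0∞) : ∑' a, p a * c = c := by
  rw [ENNReal.tsum_mul_right, p.tsum_coe, one_mul]

theorem tsum_pure_mul (a : α) (J : α → ℝ≥0∞) : ∑' b, pure a b * J b = J a := by
  rw [tsum_eq_single a fun b hb => by simp [pure_apply, hb]]
  simp

theorem tsum_bind_mul (p : PMF α) (q : α → PMF β) (J : β → ℝ≥0∞) :
    ∑' b, p.bind q b * J b = ∑' a, p a * ∑' b, q a b * J b := by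
  simp only [bind_apply, ← ENNReal.tsum_mul_right, ← ENNReal.tsum_mul_left, mul_assoc]
  exact ENNReal.tsum_comm

theorem tsum_map_mul (p : PMF α) (h : α → β) (J : β → ℝ≥0∞) :
    ∑' b, p.map h b * J b = ∑' a, p a * J (h a) := by
  simp only [map, tsum_bind_mul, Function.comp_apply, tsum_pure_mul]

end PMF

namespace SSP

variable {X U W : Type*} [Countable W] (S : SSP X U W)

section Expectation

variable (π : ℕ → X → U) (x : X)

lemma expect_zero (J : X → ℝ≥0∞) : S.expect π x 0 J = J x :=
  PMF.tsum_pure_mul x J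

lemma expect_succ (k : ℕ) (J : X → ℝ≥0∞) :
    S.expect π x (k + 1) J
      = S.expect π x k fun z => ∑' w, S.P z (π k z) w * J (S.f z (π k z) w) := by
  simp only [expect, stateDist, PMF.tsum_bind_mul, PMF.tsum_map_mul]

variable {π x} in
lemma expect_mono {k : ℕ} {J J' : X → ℝ≥0∞} (h : J ≤ J') :
    S.expect π x k J ≤ S.expect π x k J' :=
  ENNReal.tsum_le_tsum fun z => mul_le_mul_right (h z) _

lemma expect_add (k : ℕ) (J J' : X → ℝ≥0∞) :
    S.expect π x k (fun z => J z + J' z) = S.expect π x k J + S.expect π x k J' := by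
  simp only [expect, mul_add, ENNReal.tsum_add]

lemma expect_const (k : ℕ) (c : ℝ≥0∞) : S.expect π x k (fun _ => c) = c :=
  PMF.tsum_mul_const _ c

lemma expect_const_mul (k : ℕ) (c : ℝ≥0∞) (J : X → ℝ≥0∞) :
    S.expect π x k (fun z => c * J z) = c * S.expect π x k J := by
  simp only [expect, mul_left_comm _ c, ENNReal.tsum_mul_left]

lemma expect_add_eq_tsum_tail (n m : ℕ) (J : X → ℝ≥0∞) :
    S.expect π x (n + m) J = ∑' z, S.stateDist π x n z * S.expect (tail π n) z m J := by
  induction m generalizing J with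
  | zero => simp only [Nat.add_zero, expect_zero]; rfl
  | succ m ih => rw [← Nat.add_assoc, expect_succ, ih]; simp only [expect_succ]; rfl

lemma tsum_stateDist_mul_tsum_expect_tail (n : ℕ) (G : ℕ → X → ℝ≥0∞) :
    ∑' z, S.stateDist π x n z * ∑' m, S.expect (tail π n) z m (G m)
      = ∑' m, S.expect π x (n + m) (G m) := by
  simp only [← ENNReal.tsum_mul_left, expect_add_eq_tsum_tail]
  exact ENNReal.tsum_comm

lemma stateDist_mul_tsum_expect_tail_le (n : ℕ) (z : X) (G : ℕ → X → ℝ≥0∞) :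
    S.stateDist π x n z * ∑' m, S.expect (tail π n) z m (G (n + m))
      ≤ ∑' k, S.expect π x k (G k) :=
  calc _ ≤ ∑' z, S.stateDist π x n z * ∑' m, S.expect (tail π n) z m (G (n + m)) :=
        ENNReal.le_tsum z
    _ = ∑' m, S.expect π x (n + m) (G (n + m)) :=
        S.tsum_stateDist_mul_tsum_expect_tail π x n fun m => G (n + m)
    _ ≤ _ := ENNReal.tsum_comp_le_tsum_of_injective (add_right_injective n) _

end Expectation

section Policies

variable {S}

lemma IsPolicy.tail {π : ℕ → X → U} (hπ : S.IsPolicy π) (n : ℕ) : S.IsPolicy (tail π n) :=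
  fun m x => hπ (n + m) x

variable (S) in
lemma exists_isPolicy : ∃ π : ℕ → X → U, S.IsPolicy π :=
  ⟨fun _ x => (S.Uc_nonempty x).some, fun _ x => (S.Uc_nonempty x).some_mem⟩

lemma IsPolicy.stateDist_t {π : ℕ → X → U} (hπ : S.IsPolicy π) (k : ℕ) :
    S.stateDist π S.t k = PMF.pure S.t := by
  induction k with
  | zero => rfl
  | succ k ih =>
    have habsorb : S.f S.t (π k S.t) = Function.const W S.t :=
      funext (S.f_absorb _ (hπ k S.t))
    rw [stateDist, ih, PMF.pure_bind, habsorb, PMF.map_const]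

lemma ProperAt.tail {π : ℕ → X → U} {x : X} (hπ : S.ProperAt π x) {n : ℕ} {z : X}
    (hz : S.stateDist π x n z ≠ 0) : S.ProperAt (tail π n) z := by
  obtain ⟨hpol, hJ, hN⟩ := hπ
  refine ⟨hpol.tail n, ?_, ?_⟩
  · exact ENNReal.lt_top_of_mul_ne_top_right
      ((S.stateDist_mul_tsum_expect_tail_le π x n z _).trans_lt hJ).ne hz
  · exact ENNReal.lt_top_of_mul_ne_top_right
      ((S.stateDist_mul_tsum_expect_tail_le π x n z _).trans_lt hN).ne hz

lemma ProperAt.mem_Xhat {π : ℕ → X → U} {x : X} (hπ : S.ProperAt π x) {n : ℕ} {z : X}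
    (hz : S.stateDist π x n z ≠ 0) : z ∈ S.Xhat :=
  show S.Jhat z < ⊤ from (iInf₂_le (SSP.tail π n) (hπ.tail hz)).trans_lt (hπ.tail hz).2.1

end Policies

lemma Q_eq_add (J : X → ℝ≥0∞) (x : X) (u : U) :
    S.Q J x u = (∑' w, S.P x u w * S.g x u w) + ∑' w, S.P x u w * J (S.f x u w) := by
  simp only [Q, mul_add, ENNReal.tsum_add]

lemma Q_mono {J J' : X → ℝ≥0∞} (h : J ≤ J') (x : X) (u : U) : S.Q J x u ≤ S.Q J' x u :=
  ENNReal.tsum_le_tsum fun _ => mul_le_mul_right (add_le_add_right (h _) _) _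

lemma bellman_le_Q (J : X → ℝ≥0∞) {x : X} {u : U} (hu : u ∈ S.Uc x) :
    S.bellman J x ≤ S.Q J x u :=
  iInf₂_le u hu

lemma bellman_mono : Monotone S.bellman := fun _ _ h x =>
  iInf₂_mono fun u _ => S.Q_mono h x u

lemma expect_Q (π : ℕ → X → U) (x : X) (n : ℕ) (J : X → ℝ≥0∞) :
    S.expect π x n (fun z => S.Q J z (π n z)) = S.stageCost π x n + S.expect π x (n + 1) J := by
  simp only [Q_eq_add, expect_add, expect_succ, stageCost]

lemma Jcost_eq_Q (π : ℕ → X → U) (x : X) :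
    S.Jcost π x = S.Q (S.Jcost (tail π 1)) x (π 0 x) := by
  have htail : ∑' m, S.stageCost π x (1 + m) = S.expect π x 1 (S.Jcost (tail π 1)) :=
    (S.tsum_stateDist_mul_tsum_expect_tail π x 1 _).symm
  rw [Jcost, tsum_eq_zero_add' ENNReal.summable]
  simp only [Nat.add_comm _ 1]
  rw [htail, Q_eq_add, expect_succ, expect_zero, stageCost, expect_zero]

lemma Jstar_le_Jcost {π : ℕ → X → U} (hπ : S.IsPolicy π) (x : X) : S.Jstar x ≤ S.Jcost π x :=
  iInf₂_le π hπ

lemma Jstar_t : S.Jstar S.t = 0 := by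
  obtain ⟨π, hπ⟩ := S.exists_isPolicy
  refine nonpos_iff_eq_zero.1 ((S.Jstar_le_Jcost hπ _).trans_eq ?_)
  refine ENNReal.tsum_eq_zero.2 fun k => ?_
  simp [stageCost, expect, hπ.stateDist_t, S.g_zero _ (hπ k S.t)]

lemma bellman_Jstar_le : S.bellman S.Jstar ≤ S.Jstar := fun x =>
  le_iInf₂ fun π (hπ : S.IsPolicy π) => calc
    S.bellman S.Jstar x ≤ S.Q S.Jstar x (π 0 x) := S.bellman_le_Q _ (hπ 0 x)
    _ ≤ S.Q (S.Jcost (tail π 1)) x (π 0 x) := S.Q_mono (S.Jstar_le_Jcost (hπ.tail 1)) x _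
    _ = S.Jcost π x := (S.Jcost_eq_Q π x).symm

lemma Jcost_le_mul_N {b : ℝ≥0∞} (hb : ∀ x u w, S.g x u w ≤ b) {π : ℕ → X → U}
    (hπ : S.IsPolicy π) (x : X) : S.Jcost π x ≤ b * S.N π x := by
  have hstage : ∀ k z, ∑' w, S.P z (π k z) w * S.g z (π k z) w
      ≤ b * if z = S.t then 0 else 1 := by
    intro k z
    by_cases hz : z = S.t
    · subst hz; simp [S.g_zero _ (hπ k S.t)]
    · rw [if_neg hz, mul_one, ← (S.P z (π k z)).tsum_mul_const b]
      exact ENNReal.tsum_le_tsum fun w => mul_le_mul_right (hb _ _ _) _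
  calc S.Jcost π x ≤ ∑' k, b * S.r π x k :=
        ENNReal.tsum_le_tsum fun k =>
          (S.expect_mono (hstage k)).trans_eq (S.expect_const_mul π x k b _)
    _ = b * S.N π x := ENNReal.tsum_mul_left

section Comparison

variable {S}

lemma sum_stageCost_add_expect_le {π : ℕ → X → U} {J : X → ℝ≥0∞} {e : ℕ → ℝ≥0∞}
    (h : ∀ k z, S.Q J z (π k z) ≤ J z + e k) (x : X) (n : ℕ) :
    (∑ k ∈ Finset.range n, S.stageCost π x k) + S.expect π x n J
      ≤ J x + ∑ k ∈ Finset.range n, e k := by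
  induction n with
  | zero => simp [expect_zero]
  | succ n ih =>
    have hstep : S.stageCost π x n + S.expect π x (n + 1) J ≤ S.expect π x n J + e n := by
      rw [← expect_Q, ← S.expect_const π x n (e n), ← expect_add]
      exact S.expect_mono (h n)
    calc (∑ k ∈ Finset.range (n + 1), S.stageCost π x k) + S.expect π x (n + 1) J
        = (∑ k ∈ Finset.range n, S.stageCost π x k)
            + (S.stageCost π x n + S.expect π x (n + 1) J) := by
          rw [Finset.sum_range_succ, add_assoc]
      _ ≤ (∑ k ∈ Finset.range n, S.stageCost π x k) + S.expect π x n J + e n := by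
          rw [add_assoc]; gcongr
      _ ≤ J x + ∑ k ∈ Finset.range (n + 1), e k := by
          rw [Finset.sum_range_succ, ← add_assoc]; gcongr

lemma Jstar_le_of_bellman_le {J : X → ℝ≥0∞} (h : S.bellman J ≤ J) : S.Jstar ≤ J := by
  intro x
  refine ENNReal.le_of_forall_pos_le_add fun ε hε _ => ?_
  obtain ⟨e, he_pos, he_sum⟩ :=
    ENNReal.exists_pos_sum_of_countable (ENNReal.coe_ne_zero.2 hε.ne') ℕ
  have hchoice : ∀ k z, ∃ u ∈ S.Uc z, S.Q J z u ≤ J z + e k := by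
    intro k z
    by_cases hz : J z = ⊤
    · obtain ⟨u, hu⟩ := S.Uc_nonempty z
      exact ⟨u, hu, by simp [hz]⟩
    · obtain ⟨u, hu, hQ⟩ : ∃ u ∈ S.Uc z, S.Q J z u < J z + e k := by
        simpa only [bellman, iInf_lt_iff, exists_prop] using
          (h z).trans_lt (ENNReal.lt_add_right hz (ENNReal.coe_ne_zero.2 (he_pos k).ne'))
      exact ⟨u, hu, hQ.le⟩
  choose φ hφ_mem hφ_le using hchoice
  calc S.Jstar x ≤ S.Jcost φ x := S.Jstar_le_Jcost hφ_mem x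
    _ ≤ J x + ε := by
      rw [Jcost, ENNReal.tsum_eq_iSup_nat]
      refine iSup_le fun n => le_self_add.trans ((sum_stageCost_add_expect_le hφ_le x n).trans ?_)
      gcongr
      exact (ENNReal.sum_le_tsum _).trans he_sum.le

lemma le_sum_stageCost_add_expect {π : ℕ → X → U} {J : X → ℝ≥0∞}
    (h : ∀ k z, J z ≤ S.Q J z (π k z)) (x : X) (n : ℕ) :
    J x ≤ (∑ k ∈ Finset.range n, S.stageCost π x k) + S.expect π x n J := by
  induction n with
  | zero => simp [expect_zero]
  | succ n ih =>
    calc J x ≤ (∑ k ∈ Finset.range n, S.stageCost π x k) + S.expect π x n J := ih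
      _ ≤ (∑ k ∈ Finset.range n, S.stageCost π x k)
            + S.expect π x n (fun z => S.Q J z (π n z)) := by
          gcongr; exact S.expect_mono (h n)
      _ = (∑ k ∈ Finset.range (n + 1), S.stageCost π x k) + S.expect π x (n + 1) J := by
          rw [expect_Q, Finset.sum_range_succ, add_assoc]

lemma ProperAt.expect_le_mul_r {π : ℕ → X → U} {x : X} (hπ : S.ProperAt π x)
    {J : X → ℝ≥0∞} (hJt : J S.t = 0) (n : ℕ) :
    S.expect π x n J ≤ (⨆ z ∈ S.Xhat, J z) * S.r π x n := by
  rw [r, ← expect_const_mul]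
  refine ENNReal.tsum_le_tsum fun z => ?_
  by_cases hz : z = S.t
  · simp [hz, hJt]
  by_cases hp : S.stateDist π x n z = 0
  · simp [hp]
  simp only [if_neg hz, mul_one]
  exact mul_le_mul_right (le_biSup J (hπ.mem_Xhat hp)) _

lemma le_Jhat_of_le_bellman {J : X → ℝ≥0∞} (hJ : J ∈ S.Bset) (h : J ≤ S.bellman J) :
    J ≤ S.Jhat := fun x =>
  le_iInf₂ fun π (hπ : S.ProperAt π x) => by
    have hr : Tendsto (fun n => S.Jcost π x + (⨆ z ∈ S.Xhat, J z) * S.r π x n) atTop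
        (nhds (S.Jcost π x)) := by
      simpa using tendsto_const_nhds.add <|
        ENNReal.Tendsto.const_mul (ENNReal.tendsto_atTop_zero_of_tsum_ne_top hπ.2.2.ne)
          (Or.inr hJ.2.ne)
    refine ge_of_tendsto' hr fun n => ?_
    calc J x ≤ (∑ k ∈ Finset.range n, S.stageCost π x k) + S.expect π x n J :=
          le_sum_stageCost_add_expect (fun k z => (h z).trans (S.bellman_le_Q J (hπ.1 k z))) x n
      _ ≤ _ := add_le_add (ENNReal.sum_le_tsum _) (hπ.expect_le_mul_r hJ.1 n)

end Comparison

lemma Jstar_eq_bellman : S.Jstar = S.bellman S.Jstar :=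
  le_antisymm (Jstar_le_of_bellman_le (S.bellman_mono S.bellman_Jstar_le)) S.bellman_Jstar_le

lemma Jstar_mem_Bset (hb : S.BoundedCost) (hup : ∃ π : ℕ → X → U, S.UniformlyProper π) :
    S.Jstar ∈ S.Bset := by
  obtain ⟨b, hb_top, hg⟩ := hb
  obtain ⟨π, hπ, hN⟩ := hup
  refine ⟨S.Jstar_t, lt_of_le_of_lt (iSup₂_le fun x hx => ?_) (ENNReal.mul_lt_top hb_top hN)⟩
  calc S.Jstar x ≤ S.Jcost π x := S.Jstar_le_Jcost hπ x
    _ ≤ b * S.N π x := S.Jcost_le_mul_N hg hπ x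
    _ ≤ b * ⨆ x ∈ S.Xhat, S.N π x := by gcongr; exact le_biSup _ hx

end SSP

/-- If `g` is bounded, there exists a uniformly proper policy, and
`Ĵ = J*`, then `J*` is the unique solution of Bellman's equation within `B`. -/
theorem Jstar_unique_in_Bset {X U W : Type*} [Countable W] (S : SSP X U W)
    (hb : S.BoundedCost) (hup : ∃ π : ℕ → X → U, S.UniformlyProper π)
    (heq : S.Jhat = S.Jstar) :
    S.Jstar ∈ S.Bset ∧ (∀ x, S.Jstar x = S.bellman S.Jstar x) ∧
    ∀ J ∈ S.Bset, (∀ x, J x = S.bellman J x) → J = S.Jstar := by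
  refine ⟨S.Jstar_mem_Bset hb hup, congrFun S.Jstar_eq_bellman, fun J hJ hJ_fix => ?_⟩
  have hJ_le_Jhat : J ≤ S.Jhat := SSP.le_Jhat_of_le_bellman hJ fun x => (hJ_fix x).le
  have hJstar_le : S.Jstar ≤ J := SSP.Jstar_le_of_bellman_le fun x => (hJ_fix x).ge
  exact le_antisymm (heq ▸ hJ_le_Jhat) hJstar_le
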